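/- Under the same hypotheses (A diagonalizable with spectral radius at most 1, B with full row rank, condition number γ), define Γ_t = (1/t)·∑_{k=1}^t Σ_k where Σ_k = ∑_{j=0}^{k−1} A^j B B* (A^j)*. Then for all integers 1 ≤ k ≤ t, λ_min(Γ_t^{-1/2} Γ_k Γ_t^{-1/2}) ≥ (1/(8γ))·(k/t). -/

import Mathlib

open Matrix BigOperators
open scoped ComplexOrder

/-- Smallest eigenvalue of a Hermitian complex matrix, as the infimum of the
(real part of the) quadratic form over unit vectors. -/
noncomputable def cLambdaMin {n : ℕ} (M : Matrix (Fin n) (Fin n) ℂ) : ℝ :=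
  sInf {r : ℝ | ∃ v : Fin n → ℂ,
    (∑ i, Complex.normSq (v i)) = 1 ∧ ((star v) ⬝ᵥ M.mulVec v).re = r}

/-- Largest eigenvalue of a Hermitian complex matrix, as the supremum of the
(real part of the) quadratic form over unit vectors. -/
noncomputable def cLambdaMax {n : ℕ} (M : Matrix (Fin n) (Fin n) ℂ) : ℝ :=
  sSup {r : ℝ | ∃ v : Fin n → ℂ,
    (∑ i, Complex.normSq (v i)) = 1 ∧ ((star v) ⬝ᵥ M.mulVec v).re = r}

/-- State covariance `Σ_k = ∑_{j=0}^{k−1} A^j B B* (A^j)*`. -/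
noncomputable def sigmaMat {n d : ℕ} (A : Matrix (Fin n) (Fin n) ℂ)
    (B : Matrix (Fin n) (Fin d) ℂ) (k : ℕ) : Matrix (Fin n) (Fin n) ℂ :=
  ∑ j ∈ Finset.range k, (A ^ j) * B * Bᴴ * ((A ^ j)ᴴ)

/-- Time-averaged covariance `Γ_t = (1/t)·∑_{k=1}^t Σ_k`. -/
noncomputable def gammaMat {n d : ℕ} (A : Matrix (Fin n) (Fin n) ℂ)
    (B : Matrix (Fin n) (Fin d) ℂ) (t : ℕ) : Matrix (Fin n) (Fin n) ℂ :=
  ((t : ℂ))⁻¹ • ∑ k ∈ Finset.Icc 1 t, sigmaMat A B k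

/-! ### Auxiliary scalar lemmas -/

lemma geo_nonneg (x:ℝ) (hx0 : 0 ≤ x) (m : ℕ) : 0 ≤ ∑ j ∈ Finset.range m, x^j :=
  Finset.sum_nonneg fun j _ => pow_nonneg hx0 j

lemma geo_mono (x:ℝ) (hx0 : 0 ≤ x) {a b : ℕ} (h : a ≤ b) :
    ∑ j ∈ Finset.range a, x^j ≤ ∑ j ∈ Finset.range b, x^j :=
  Finset.sum_le_sum_of_subset_of_nonneg (Finset.range_subset_range.2 h)
    (fun j _ _ => pow_nonneg hx0 j)

lemma geo_mul_le (x:ℝ) (hx0 : 0 ≤ x) (hx1 : x ≤ 1) (a b : ℕ) :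
    ∑ j ∈ Finset.range (a*b), x^j ≤ (a:ℝ) * ∑ j ∈ Finset.range b, x^j := by
  induction a with
  | zero => simp
  | succ a ih =>
    have : (a+1)*b = a*b + b := by ring
    rw [this, Finset.sum_range_add]
    have h2 : ∑ i ∈ Finset.range b, x^(a*b+i) ≤ ∑ i ∈ Finset.range b, x^i := by
      refine Finset.sum_le_sum fun i _ => ?_
      rw [pow_add]
      exact mul_le_of_le_one_left (pow_nonneg hx0 i) (pow_le_one₀ hx0 hx1)
    push_cast
    nlinarith [geo_nonneg x hx0 b]

lemma key_scalar (x:ℝ) (hx0 : 0 ≤ x) (hx1 : x ≤ 1) (k t : ℕ) (hk : 1 ≤ k) (hkt : k ≤ t) :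
    (k:ℝ)^2 * (∑ m ∈ Finset.Icc 1 t, ∑ j ∈ Finset.range m, x^j)
      ≤ 8*(t:ℝ)^2 * (∑ m ∈ Finset.Icc 1 k, ∑ j ∈ Finset.range m, x^j) := by
  set m₀ : ℕ := (k+1)/2 with hm₀
  set c : ℕ := t / m₀ + 1 with hc
  have hm₀1 : 1 ≤ m₀ := by omega
  have hm₀k : m₀ ≤ k := by omega
  have hk2m₀ : k ≤ 2 * m₀ := by omega
  have ht1 : 1 ≤ t := le_trans hk hkt
  set s : ℕ → ℝ := fun m => ∑ j ∈ Finset.range m, x^j with hs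
  have hup : ∑ m ∈ Finset.Icc 1 t, s m ≤ (t:ℝ) * s t := by
    calc ∑ m ∈ Finset.Icc 1 t, s m ≤ ∑ m ∈ Finset.Icc 1 t, s t :=
          Finset.sum_le_sum fun m hm => geo_mono x hx0 (Finset.mem_Icc.1 hm).2
      _ = (t:ℝ) * s t := by
          rw [Finset.sum_const, Nat.card_Icc, Nat.add_sub_cancel, nsmul_eq_mul]
  have hst : s t ≤ (c:ℝ) * s m₀ := by
    have htcm : t ≤ c * m₀ := by
      have h1 := Nat.div_add_mod t m₀
      have h2 := Nat.mod_lt t (show 0 < m₀ by omega)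
      have : c * m₀ = m₀ * (t/m₀) + m₀ := by rw [hc]; ring
      omega
    calc s t ≤ s (c * m₀) := geo_mono x hx0 htcm
      _ ≤ (c:ℝ) * s m₀ := geo_mul_le x hx0 hx1 c m₀
  have hlow : (m₀:ℝ) * s m₀ ≤ ∑ m ∈ Finset.Icc 1 k, s m := by
    calc (m₀:ℝ) * s m₀ ≤ ∑ m ∈ Finset.Icc m₀ k, s m₀ := by
          rw [Finset.sum_const, Nat.card_Icc, nsmul_eq_mul]
          have hle : (m₀:ℝ) ≤ ((k + 1 - m₀ : ℕ) : ℝ) := by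
            have : m₀ ≤ k + 1 - m₀ := by omega
            exact_mod_cast this
          exact mul_le_mul_of_nonneg_right hle (geo_nonneg x hx0 _)
      _ ≤ ∑ m ∈ Finset.Icc m₀ k, s m :=
          Finset.sum_le_sum fun m hm => geo_mono x hx0 (Finset.mem_Icc.1 hm).1
      _ ≤ ∑ m ∈ Finset.Icc 1 k, s m :=
          Finset.sum_le_sum_of_subset_of_nonneg
            (Finset.Icc_subset_Icc hm₀1 le_rfl) (fun m _ _ => geo_nonneg x hx0 m)
  have hnat : k^2 * t * c ≤ 8 * t^2 * m₀ := by
    have h1 : m₀ * c ≤ 2 * t := by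
      have h2 : m₀ * (t / m₀) ≤ t := Nat.mul_div_le t m₀
      have : m₀ * c = m₀ * (t/m₀) + m₀ := by rw [hc]; ring
      omega
    have key : (k^2 * t * c) * m₀ ≤ (8 * t^2 * m₀) * m₀ := by
      calc (k^2 * t * c) * m₀ = (k*k) * (t * (m₀ * c)) := by ring
        _ ≤ ((2*m₀)*(2*m₀)) * (t * (2*t)) := by gcongr
        _ = (8 * t^2 * m₀) * m₀ := by ring
    exact Nat.le_of_mul_le_mul_right key (by omega)
  have hsm₀ : 0 ≤ s m₀ := geo_nonneg x hx0 _
  have hcast : (k:ℝ)^2 * t * c ≤ 8 * (t:ℝ)^2 * m₀ := by exact_mod_cast hnat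
  calc (k:ℝ)^2 * (∑ m ∈ Finset.Icc 1 t, s m)
      ≤ (k:ℝ)^2 * ((t:ℝ) * ((c:ℝ) * s m₀)) := by
        have h0 : (0:ℝ) ≤ (k:ℝ)^2 := by positivity
        have := hup.trans (by
          have ht0 : (0:ℝ) ≤ (t:ℝ) := by positivity
          exact mul_le_mul_of_nonneg_left hst ht0)
        exact mul_le_mul_of_nonneg_left this h0
    _ = ((k:ℝ)^2 * t * c) * s m₀ := by ring
    _ ≤ (8 * (t:ℝ)^2 * m₀) * s m₀ := mul_le_mul_of_nonneg_right hcast hsm₀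
    _ = 8 * (t:ℝ)^2 * ((m₀:ℝ) * s m₀) := by ring
    _ ≤ 8 * (t:ℝ)^2 * (∑ m ∈ Finset.Icc 1 k, s m) := by
        have h0 : (0:ℝ) ≤ 8 * (t:ℝ)^2 := by positivity
        exact mul_le_mul_of_nonneg_left hlow h0

/-! ### Quadratic form helpers -/

lemma quadConj {n m : ℕ} (M : Matrix (Fin m) (Fin m) ℂ) (X : Matrix (Fin m) (Fin n) ℂ)
    (v : Fin n → ℂ) :
    star v ⬝ᵥ (Xᴴ * M * X) *ᵥ v = star (X *ᵥ v) ⬝ᵥ M *ᵥ (X *ᵥ v) := by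
  rw [star_mulVec, dotProduct_mulVec, dotProduct_mulVec, ← vecMul_vecMul, ← vecMul_vecMul,
    dotProduct_mulVec]

lemma dot_star_self {n : ℕ} (v : Fin n → ℂ) :
    star v ⬝ᵥ v = ((∑ i, Complex.normSq (v i) : ℝ) : ℂ) := by
  simp only [dotProduct, Pi.star_apply, Complex.ofReal_sum]
  refine Finset.sum_congr rfl fun i _ => ?_
  rw [RCLike.star_def, Complex.normSq_eq_conj_mul_self]

lemma herm_quad_ge {n : ℕ} {M : Matrix (Fin n) (Fin n) ℂ} (hM : M.IsHermitian)
    (c : ℝ) (h : ∀ i, c ≤ hM.eigenvalues i) (v : Fin n → ℂ) :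
    c * ∑ i, Complex.normSq (v i) ≤ (star v ⬝ᵥ M *ᵥ v).re := by
  have hpsd : (M - (c:ℂ) • 1).PosSemidef := by
    set U : Matrix (Fin n) (Fin n) ℂ := (hM.eigenvectorUnitary : Matrix (Fin n) (Fin n) ℂ)
      with hUdef
    have hU : U * star U = 1 := Matrix.mem_unitaryGroup_iff.mp hM.eigenvectorUnitary.2
    have hd : diagonal (RCLike.ofReal ∘ hM.eigenvalues) - (c:ℂ) • (1 : Matrix (Fin n) (Fin n) ℂ)
        = diagonal (fun i => ((hM.eigenvalues i - c : ℝ) : ℂ)) := by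
      rw [← Matrix.diagonal_one, ← Matrix.diagonal_smul, Matrix.diagonal_sub]
      congr 1
      funext i
      simp [Complex.ofReal_sub]
    have heq : M - (c:ℂ) • 1 =
        U * diagonal (fun i => ((hM.eigenvalues i - c : ℝ) : ℂ)) * star U := by
      rw [← hd, Matrix.mul_sub, Matrix.sub_mul, Matrix.mul_smul, Matrix.mul_one,
        Matrix.smul_mul, hU]
      conv_lhs => rw [hM.spectral_theorem]
      simp [hUdef]
    rw [heq]
    refine Matrix.PosSemidef.mul_mul_conjTranspose_same ?_ _
    refine Matrix.posSemidef_diagonal_iff.mpr fun i => ?_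
    rw [← Complex.ofReal_zero, Complex.real_le_real]
    linarith [h i]
  have h0 := hpsd.re_dotProduct_nonneg v
  have hexp : star v ⬝ᵥ (M - (c:ℂ) • 1) *ᵥ v
      = star v ⬝ᵥ M *ᵥ v - (c:ℂ) * (star v ⬝ᵥ v) := by
    rw [Matrix.sub_mulVec, dotProduct_sub, Matrix.smul_mulVec, Matrix.one_mulVec,
      dotProduct_smul, smul_eq_mul]
  rw [hexp, dot_star_self] at h0
  have h2 : RCLike.re (star v ⬝ᵥ M *ᵥ v - (c:ℂ) * ((∑ i, Complex.normSq (v i) : ℝ) : ℂ))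
      = (star v ⬝ᵥ M *ᵥ v).re - c * ∑ i, Complex.normSq (v i) := by
    simp [Complex.sub_re, Complex.mul_re, RCLike.re]
  rw [h2] at h0
  linarith

lemma herm_quad_le {n : ℕ} {M : Matrix (Fin n) (Fin n) ℂ} (hM : M.IsHermitian)
    (c : ℝ) (h : ∀ i, hM.eigenvalues i ≤ c) (v : Fin n → ℂ) :
    (star v ⬝ᵥ M *ᵥ v).re ≤ c * ∑ i, Complex.normSq (v i) := by
  have hpsd : ((c:ℂ) • 1 - M).PosSemidef := by
    set U : Matrix (Fin n) (Fin n) ℂ := (hM.eigenvectorUnitary : Matrix (Fin n) (Fin n) ℂ)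
      with hUdef
    have hU : U * star U = 1 := Matrix.mem_unitaryGroup_iff.mp hM.eigenvectorUnitary.2
    have hd : (c:ℂ) • (1 : Matrix (Fin n) (Fin n) ℂ) - diagonal (RCLike.ofReal ∘ hM.eigenvalues)
        = diagonal (fun i => ((c - hM.eigenvalues i : ℝ) : ℂ)) := by
      rw [← Matrix.diagonal_one, ← Matrix.diagonal_smul, Matrix.diagonal_sub]
      congr 1
      funext i
      simp [Complex.ofReal_sub]
    have heq : (c:ℂ) • 1 - M =
        U * diagonal (fun i => ((c - hM.eigenvalues i : ℝ) : ℂ)) * star U := by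
      rw [← hd, Matrix.mul_sub, Matrix.sub_mul, Matrix.mul_smul, Matrix.mul_one,
        Matrix.smul_mul, hU]
      conv_lhs => rw [hM.spectral_theorem]
      simp [hUdef]
    rw [heq]
    refine Matrix.PosSemidef.mul_mul_conjTranspose_same ?_ _
    refine Matrix.posSemidef_diagonal_iff.mpr fun i => ?_
    rw [← Complex.ofReal_zero, Complex.real_le_real]
    linarith [h i]
  have h0 := hpsd.re_dotProduct_nonneg v
  have hexp : star v ⬝ᵥ ((c:ℂ) • 1 - M) *ᵥ v
      = (c:ℂ) * (star v ⬝ᵥ v) - star v ⬝ᵥ M *ᵥ v := by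
    rw [Matrix.sub_mulVec, dotProduct_sub, Matrix.smul_mulVec, Matrix.one_mulVec,
      dotProduct_smul, smul_eq_mul]
  rw [hexp, dot_star_self] at h0
  have h2 : RCLike.re ((c:ℂ) * ((∑ i, Complex.normSq (v i) : ℝ) : ℂ) - star v ⬝ᵥ M *ᵥ v)
      = c * ∑ i, Complex.normSq (v i) - (star v ⬝ᵥ M *ᵥ v).re := by
    simp [Complex.sub_re, Complex.mul_re, RCLike.re]
  rw [h2] at h0
  linarith

lemma quad_scale {n : ℕ} (M : Matrix (Fin n) (Fin n) ℂ) (v : Fin n → ℂ) (r : ℝ) :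
    (star ((r:ℂ) • v) ⬝ᵥ M *ᵥ ((r:ℂ) • v)).re = r^2 * (star v ⬝ᵥ M *ᵥ v).re := by
  have h : star ((r:ℂ) • v) ⬝ᵥ M *ᵥ ((r:ℂ) • v) = ((r:ℂ)*(r:ℂ)) * (star v ⬝ᵥ M *ᵥ v) := by
    rw [star_smul, mulVec_smul, smul_dotProduct, dotProduct_smul]
    simp only [smul_eq_mul, RCLike.star_def, Complex.conj_ofReal]
    ring
  rw [h, show ((r:ℂ)*(r:ℂ)) = ((r^2:ℝ):ℂ) by push_cast; ring, Complex.re_ofReal_mul]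

lemma sumNormSq_smul {n : ℕ} (v : Fin n → ℂ) (r : ℝ) :
    ∑ i, Complex.normSq (((r:ℂ) • v) i) = r^2 * ∑ i, Complex.normSq (v i) := by
  rw [Finset.mul_sum]
  refine Finset.sum_congr rfl fun i _ => ?_
  simp [Complex.normSq_mul, Complex.normSq_ofReal, sq]
  try ring

lemma sumNormSq_single {n : ℕ} (hn : 0 < n) :
    ∑ i, Complex.normSq ((Pi.single (⟨0, hn⟩ : Fin n) (1:ℂ) : Fin n → ℂ) i) = 1 := by
  rw [Finset.sum_eq_single (⟨0, hn⟩ : Fin n)]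
  · simp
  · intro b _ hb; rw [Pi.single_eq_of_ne hb]; simp
  · simp

section
variable {n : ℕ} {M : Matrix (Fin n) (Fin n) ℂ}

lemma quadSet_nonempty (hn : 0 < n) :
    {r : ℝ | ∃ v : Fin n → ℂ,
      (∑ i, Complex.normSq (v i)) = 1 ∧ ((star v) ⬝ᵥ M.mulVec v).re = r}.Nonempty :=
  ⟨_, (Pi.single (⟨0, hn⟩ : Fin n) (1:ℂ) : Fin n → ℂ), sumNormSq_single hn, rfl⟩

lemma quadSet_bddBelow (hn : 0 < n) (hM : M.IsHermitian) :
    BddBelow {r : ℝ | ∃ v : Fin n → ℂ,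
      (∑ i, Complex.normSq (v i)) = 1 ∧ ((star v) ⬝ᵥ M.mulVec v).re = r} := by
  have : Nonempty (Fin n) := ⟨⟨0, hn⟩⟩
  refine ⟨Finset.univ.inf' Finset.univ_nonempty hM.eigenvalues, ?_⟩
  rintro r ⟨v, hv1, rfl⟩
  have := herm_quad_ge hM (Finset.univ.inf' Finset.univ_nonempty hM.eigenvalues)
    (fun i => Finset.inf'_le hM.eigenvalues (Finset.mem_univ i)) v
  rw [hv1, mul_one] at this
  exact this

lemma quadSet_bddAbove (hn : 0 < n) (hM : M.IsHermitian) :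
    BddAbove {r : ℝ | ∃ v : Fin n → ℂ,
      (∑ i, Complex.normSq (v i)) = 1 ∧ ((star v) ⬝ᵥ M.mulVec v).re = r} := by
  have : Nonempty (Fin n) := ⟨⟨0, hn⟩⟩
  refine ⟨Finset.univ.sup' Finset.univ_nonempty hM.eigenvalues, ?_⟩
  rintro r ⟨v, hv1, rfl⟩
  have := herm_quad_le hM (Finset.univ.sup' Finset.univ_nonempty hM.eigenvalues)
    (fun i => Finset.le_sup' hM.eigenvalues (Finset.mem_univ i)) v
  rw [hv1, mul_one] at this
  exact this

lemma cmin_quad (hn : 0 < n) (hM : M.IsHermitian) (v : Fin n → ℂ) :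
    cLambdaMin M * ∑ i, Complex.normSq (v i) ≤ (star v ⬝ᵥ M *ᵥ v).re := by
  by_cases hv : ∑ i, Complex.normSq (v i) = 0
  · have hv0 : v = 0 := by
      funext i
      have h1 : ∀ j ∈ Finset.univ, (0:ℝ) ≤ Complex.normSq (v j) :=
        fun j _ => Complex.normSq_nonneg _
      have := (Finset.sum_eq_zero_iff_of_nonneg h1).mp hv i (Finset.mem_univ i)
      exact Complex.normSq_eq_zero.mp this
    rw [hv, hv0]
    simp
  · have hS : 0 < ∑ i, Complex.normSq (v i) :=
      lt_of_le_of_ne (Finset.sum_nonneg fun i _ => Complex.normSq_nonneg _) (Ne.symm hv)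
    set Sv := ∑ i, Complex.normSq (v i) with hSv
    set r : ℝ := (Real.sqrt Sv)⁻¹ with hr
    have hr2 : r^2 * Sv = 1 := by
      rw [hr, inv_pow, Real.sq_sqrt hS.le]
      field_simp
    have hmem : (star ((r:ℂ) • v) ⬝ᵥ M *ᵥ ((r:ℂ) • v)).re ∈
        {r : ℝ | ∃ v : Fin n → ℂ,
          (∑ i, Complex.normSq (v i)) = 1 ∧ ((star v) ⬝ᵥ M.mulVec v).re = r} :=
      ⟨(r:ℂ) • v, by rw [sumNormSq_smul]; exact hr2, rfl⟩
    have h1 : cLambdaMin M ≤ r^2 * (star v ⬝ᵥ M *ᵥ v).re := by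
      have := csInf_le (quadSet_bddBelow hn hM) hmem
      rwa [quad_scale] at this
    calc cLambdaMin M * Sv ≤ (r^2 * (star v ⬝ᵥ M *ᵥ v).re) * Sv :=
          mul_le_mul_of_nonneg_right h1 hS.le
      _ = (r^2 * Sv) * (star v ⬝ᵥ M *ᵥ v).re := by ring
      _ = (star v ⬝ᵥ M *ᵥ v).re := by rw [hr2, one_mul]

lemma quad_cmax (hn : 0 < n) (hM : M.IsHermitian) (v : Fin n → ℂ) :
    (star v ⬝ᵥ M *ᵥ v).re ≤ cLambdaMax M * ∑ i, Complex.normSq (v i) := by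
  by_cases hv : ∑ i, Complex.normSq (v i) = 0
  · have hv0 : v = 0 := by
      funext i
      have h1 : ∀ j ∈ Finset.univ, (0:ℝ) ≤ Complex.normSq (v j) :=
        fun j _ => Complex.normSq_nonneg _
      have := (Finset.sum_eq_zero_iff_of_nonneg h1).mp hv i (Finset.mem_univ i)
      exact Complex.normSq_eq_zero.mp this
    rw [hv, hv0]
    simp
  · have hS : 0 < ∑ i, Complex.normSq (v i) :=
      lt_of_le_of_ne (Finset.sum_nonneg fun i _ => Complex.normSq_nonneg _) (Ne.symm hv)
    set Sv := ∑ i, Complex.normSq (v i) with hSv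
    set r : ℝ := (Real.sqrt Sv)⁻¹ with hr
    have hr2 : r^2 * Sv = 1 := by
      rw [hr, inv_pow, Real.sq_sqrt hS.le]
      field_simp
    have hmem : (star ((r:ℂ) • v) ⬝ᵥ M *ᵥ ((r:ℂ) • v)).re ∈
        {r : ℝ | ∃ v : Fin n → ℂ,
          (∑ i, Complex.normSq (v i)) = 1 ∧ ((star v) ⬝ᵥ M.mulVec v).re = r} :=
      ⟨(r:ℂ) • v, by rw [sumNormSq_smul]; exact hr2, rfl⟩
    have h1 : r^2 * (star v ⬝ᵥ M *ᵥ v).re ≤ cLambdaMax M := by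
      have := le_csSup (quadSet_bddAbove hn hM) hmem
      rwa [quad_scale] at this
    calc (star v ⬝ᵥ M *ᵥ v).re = (r^2 * Sv) * (star v ⬝ᵥ M *ᵥ v).re := by
          rw [hr2, one_mul]
      _ = (r^2 * (star v ⬝ᵥ M *ᵥ v).re) * Sv := by ring
      _ ≤ cLambdaMax M * Sv := mul_le_mul_of_nonneg_right h1 hS.le

lemma cmin_pos (hn : 0 < n) (hM : M.PosDef) : 0 < cLambdaMin M := by
  have : Nonempty (Fin n) := ⟨⟨0, hn⟩⟩
  have hlb : ∀ r ∈ {r : ℝ | ∃ v : Fin n → ℂ,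
      (∑ i, Complex.normSq (v i)) = 1 ∧ ((star v) ⬝ᵥ M.mulVec v).re = r},
      Finset.univ.inf' Finset.univ_nonempty hM.1.eigenvalues ≤ r := by
    rintro r ⟨v, hv1, rfl⟩
    have := herm_quad_ge hM.1 (Finset.univ.inf' Finset.univ_nonempty hM.1.eigenvalues)
      (fun i => Finset.inf'_le hM.1.eigenvalues (Finset.mem_univ i)) v
    rw [hv1, mul_one] at this
    exact this
  have hpos : 0 < Finset.univ.inf' Finset.univ_nonempty hM.1.eigenvalues := by
    obtain ⟨i, _, hi⟩ := Finset.exists_mem_eq_inf' Finset.univ_nonempty hM.1.eigenvalues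
    rw [hi]
    exact hM.eigenvalues_pos i
  exact lt_of_lt_of_le hpos (le_csInf (quadSet_nonempty hn) hlb)

lemma cmin_le_cmax (hn : 0 < n) (hM : M.IsHermitian) : cLambdaMin M ≤ cLambdaMax M := by
  obtain ⟨r, hr⟩ := quadSet_nonempty (M := M) hn
  exact le_trans (csInf_le (quadSet_bddBelow hn hM) hr) (le_csSup (quadSet_bddAbove hn hM) hr)

end

/-! ### Positive definiteness lemmas -/

lemma BBH_isUnit {n d : ℕ} (B : Matrix (Fin n) (Fin d) ℂ) (hB : B.rank = n) :
    IsUnit (B * Bᴴ) := by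
  rw [← Matrix.mulVec_surjective_iff_isUnit]
  have hr : (B * Bᴴ).rank = n := by rw [Matrix.rank_self_mul_conjTranspose, hB]
  have htop : LinearMap.range (B * Bᴴ).mulVecLin = ⊤ := by
    apply Submodule.eq_top_of_finrank_eq
    rw [show Module.finrank ℂ ↥(LinearMap.range (B * Bᴴ).mulVecLin) = (B * Bᴴ).rank from rfl, hr]
    simp
  intro y
  obtain ⟨x, hx⟩ := LinearMap.range_eq_top.mp htop y
  exact ⟨x, hx⟩

lemma BBH_posDef {n d : ℕ} (B : Matrix (Fin n) (Fin d) ℂ) (hB : B.rank = n) :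
    (B * Bᴴ).PosDef := by
  have hpsd := Matrix.posSemidef_self_mul_conjTranspose B
  refine Matrix.PosDef.of_dotProduct_mulVec_pos hpsd.isHermitian fun x hx => ?_
  refine lt_of_le_of_ne (hpsd.dotProduct_mulVec_nonneg x) fun h0 => hx ?_
  have h1 : (B * Bᴴ) *ᵥ x = 0 := (hpsd.dotProduct_mulVec_zero_iff x).mp h0.symm
  have hinj := Matrix.mulVec_injective_iff_isUnit.mpr (BBH_isUnit B hB)
  have h2 : (B * Bᴴ) *ᵥ x = (B * Bᴴ) *ᵥ 0 := by rw [h1, Matrix.mulVec_zero]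
  exact hinj h2

lemma posDef_conj {n : ℕ} {P X : Matrix (Fin n) (Fin n) ℂ} (hP : P.PosDef)
    (hX : IsUnit X.det) : (X * P * Xᴴ).PosDef := by
  refine Matrix.PosDef.of_dotProduct_mulVec_pos ?_ ?_
  · have := hP.isHermitian
    rw [Matrix.IsHermitian, Matrix.conjTranspose_mul, Matrix.conjTranspose_mul,
      Matrix.conjTranspose_conjTranspose, this.eq, Matrix.mul_assoc]
  · intro x hx
    have hXH : IsUnit Xᴴ.det := by
      rw [Matrix.det_conjTranspose]
      exact hX.star
    have hinj := Matrix.mulVec_injective_iff_isUnit.mpr (Matrix.isUnit_iff_isUnit_det _ |>.mpr hXH)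
    have hXx : Xᴴ *ᵥ x ≠ 0 := by
      intro h
      apply hx
      apply hinj
      rw [h, Matrix.mulVec_zero]
    have hq : star x ⬝ᵥ (X * P * Xᴴ) *ᵥ x = star (Xᴴ *ᵥ x) ⬝ᵥ P *ᵥ (Xᴴ *ᵥ x) := by
      have h3 : X * P * Xᴴ = (Xᴴ)ᴴ * P * Xᴴ := by rw [Matrix.conjTranspose_conjTranspose]
      rw [h3, quadConj]
    rw [hq]
    exact hP.dotProduct_mulVec_pos hXx

lemma sum_mulVec' {n : ℕ} {ι : Type*} (s : Finset ι) (f : ι → Matrix (Fin n) (Fin n) ℂ)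
    (v : Fin n → ℂ) : (∑ j ∈ s, f j) *ᵥ v = ∑ j ∈ s, f j *ᵥ v := by
  induction s using Finset.cons_induction with
  | empty => simp [Matrix.zero_mulVec]
  | cons a s ha ih => rw [Finset.sum_cons, Finset.sum_cons, Matrix.add_mulVec, ih]

lemma dotProduct_sum' {n : ℕ} {ι : Type*} (a : Fin n → ℂ) (s : Finset ι)
    (f : ι → Fin n → ℂ) : a ⬝ᵥ (∑ j ∈ s, f j) = ∑ j ∈ s, a ⬝ᵥ f j := by
  induction s using Finset.cons_induction with
  | empty => simp
  | cons b s hb ih => rw [Finset.sum_cons, Finset.sum_cons, dotProduct_add, ih]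

/-! ### Main theorem -/

/-- If `A = S D S⁻¹` is diagonalizable with spectral radius at most `1` and `B` has
full row rank `n`, then with `γ = λ_max(S⁻¹BB*S⁻*)/λ_min(S⁻¹BB*S⁻*)` and `R` the
positive definite square root of `Γ_t` (so `Γ_t^{-1/2} = R⁻¹`), for all
`1 ≤ k ≤ t`: `λ_min(Γ_t^{-1/2} Γ_k Γ_t^{-1/2}) ≥ (1/(8γ))·(k/t)`. -/
theorem stmt8 {n d : ℕ} (A S : Matrix (Fin n) (Fin n) ℂ) (dvec : Fin n → ℂ)
    (B : Matrix (Fin n) (Fin d) ℂ)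
    (hS : IsUnit S.det)
    (hdiag : A = S * Matrix.diagonal dvec * S⁻¹)
    (hρ : ∀ i, ‖dvec i‖ ≤ 1)
    (hB : B.rank = n)
    (k t : ℕ) (hk : 1 ≤ k) (hkt : k ≤ t)
    (R : Matrix (Fin n) (Fin n) ℂ) (hR : R.PosDef) (hRR : R * R = gammaMat A B t) :
    (1 / (8 * (cLambdaMax (S⁻¹ * B * Bᴴ * (S⁻¹)ᴴ) / cLambdaMin (S⁻¹ * B * Bᴴ * (S⁻¹)ᴴ))))
        * ((k : ℝ) / (t : ℝ))
      ≤ cLambdaMin (R⁻¹ * gammaMat A B k * R⁻¹) := by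
  rcases Nat.eq_zero_or_pos n with hn | hn
  · -- degenerate case `n = 0`
    subst hn
    have hset : ∀ (X : Matrix (Fin 0) (Fin 0) ℂ),
        {r : ℝ | ∃ v : Fin 0 → ℂ,
          (∑ i, Complex.normSq (v i)) = 1 ∧ ((star v) ⬝ᵥ X.mulVec v).re = r} = ∅ := by
      intro X
      ext r
      simp
    simp only [cLambdaMin, cLambdaMax, hset, Real.sInf_empty, Real.sSup_empty]
    norm_num
  · -- main case `0 < n`
    set D : Matrix (Fin n) (Fin n) ℂ := Matrix.diagonal dvec with hD
    set M : Matrix (Fin n) (Fin n) ℂ := S⁻¹ * B * Bᴴ * (S⁻¹)ᴴ with hMdef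
    have hMpd : M.PosDef := by
      have h1 : M = S⁻¹ * (B * Bᴴ) * (S⁻¹)ᴴ := by
        rw [hMdef]
        simp only [Matrix.mul_assoc]
      rw [h1]
      exact posDef_conj (BBH_posDef B hB) (S.isUnit_nonsing_inv_det hS)
    set μ : ℝ := cLambdaMin M with hμdef
    set ν : ℝ := cLambdaMax M with hνdef
    have hμ : 0 < μ := cmin_pos hn hMpd
    have hμν : μ ≤ ν := cmin_le_cmax hn hMpd.1
    have hν : 0 < ν := lt_of_lt_of_le hμ hμν
    have ht1 : 1 ≤ t := le_trans hk hkt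
    have htpos : (0:ℝ) < t := by exact_mod_cast ht1
    have hkpos : (0:ℝ) < k := by exact_mod_cast hk
    -- powers of A
    have hpow : ∀ j : ℕ, A ^ j = S * D ^ j * S⁻¹ := by
      intro j
      induction j with
      | zero => rw [pow_zero, pow_zero, Matrix.mul_one, Matrix.mul_nonsing_inv S hS]
      | succ j ih =>
        rw [pow_succ, ih, hdiag, pow_succ]
        calc S * D ^ j * S⁻¹ * (S * D * S⁻¹)
            = S * (D ^ j * ((S⁻¹ * S) * (D * S⁻¹))) := by
              simp only [Matrix.mul_assoc, hD]
          _ = S * (D ^ j * D) * S⁻¹ := by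
              rw [Matrix.nonsing_inv_mul S hS, Matrix.one_mul]
              simp only [Matrix.mul_assoc]
    have hsigTerm : ∀ j : ℕ, A ^ j * B * Bᴴ * (A ^ j)ᴴ = (S * D ^ j) * M * (S * D ^ j)ᴴ := by
      intro j
      rw [hpow j, hMdef]
      simp only [Matrix.conjTranspose_mul, Matrix.mul_assoc]
    -- quadratic form computations for a fixed vector v
    have hquadSig : ∀ (v : Fin n → ℂ) (m : ℕ),
        (star v ⬝ᵥ (sigmaMat A B m) *ᵥ v).re
          = ∑ j ∈ Finset.range m, (star ((S * D ^ j)ᴴ *ᵥ v) ⬝ᵥ M *ᵥ ((S * D ^ j)ᴴ *ᵥ v)).re := by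
      intro v m
      rw [sigmaMat, sum_mulVec', dotProduct_sum', Complex.re_sum]
      refine Finset.sum_congr rfl fun j _ => ?_
      rw [hsigTerm j, show (S * D ^ j) * M * (S * D ^ j)ᴴ
        = ((S * D ^ j)ᴴ)ᴴ * M * ((S * D ^ j)ᴴ) by rw [Matrix.conjTranspose_conjTranspose],
        quadConj]
    have hNj : ∀ (v : Fin n → ℂ) (j : ℕ),
        ∑ i, Complex.normSq (((S * D ^ j)ᴴ *ᵥ v) i)
          = ∑ i, (Complex.normSq (dvec i))^j * Complex.normSq ((Sᴴ *ᵥ v) i) := by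
      intro v j
      refine Finset.sum_congr rfl fun i _ => ?_
      have h1 : (S * D ^ j)ᴴ *ᵥ v = (D ^ j)ᴴ *ᵥ (Sᴴ *ᵥ v) := by
        rw [Matrix.conjTranspose_mul, Matrix.mulVec_mulVec]
      rw [h1]
      have h2 : (D ^ j)ᴴ = Matrix.diagonal (fun i => star (dvec i ^ j)) := by
        rw [hD, Matrix.diagonal_pow, Matrix.diagonal_conjTranspose]
        congr 1
      rw [h2, Matrix.mulVec_diagonal]
      rw [Complex.normSq_mul, RCLike.star_def, Complex.normSq_conj, map_pow]
    -- sandwich bounds for sigma quadratic forms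
    have hsig_lb : ∀ (v : Fin n → ℂ) (m : ℕ),
        μ * ∑ j ∈ Finset.range m, ∑ i, (Complex.normSq (dvec i))^j
            * Complex.normSq ((Sᴴ *ᵥ v) i)
          ≤ (star v ⬝ᵥ (sigmaMat A B m) *ᵥ v).re := by
      intro v m
      rw [hquadSig v m, Finset.mul_sum]
      refine Finset.sum_le_sum fun j _ => ?_
      rw [← hNj v j]
      exact cmin_quad hn hMpd.1 _
    have hsig_ub : ∀ (v : Fin n → ℂ) (m : ℕ),
        (star v ⬝ᵥ (sigmaMat A B m) *ᵥ v).re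
          ≤ ν * ∑ j ∈ Finset.range m, ∑ i, (Complex.normSq (dvec i))^j
            * Complex.normSq ((Sᴴ *ᵥ v) i) := by
      intro v m
      rw [hquadSig v m, Finset.mul_sum]
      refine Finset.sum_le_sum fun j _ => ?_
      rw [← hNj v j]
      exact quad_cmax hn hMpd.1 _
    -- gamma quadratic form
    have hgam : ∀ (v : Fin n → ℂ) (s : ℕ),
        (star v ⬝ᵥ (gammaMat A B s) *ᵥ v).re
          = (s:ℝ)⁻¹ * ∑ m ∈ Finset.Icc 1 s, (star v ⬝ᵥ (sigmaMat A B m) *ᵥ v).re := by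
      intro v s
      rw [gammaMat, Matrix.smul_mulVec, dotProduct_smul, smul_eq_mul,
        show ((s:ℂ))⁻¹ = (((s:ℝ)⁻¹ : ℝ) : ℂ) by push_cast; ring,
        Complex.re_ofReal_mul, sum_mulVec', dotProduct_sum', Complex.re_sum]
    -- the pointwise sums H
    have hHswap : ∀ (v : Fin n → ℂ) (s : ℕ),
        ∑ m ∈ Finset.Icc 1 s, ∑ j ∈ Finset.range m, ∑ i, (Complex.normSq (dvec i))^j
            * Complex.normSq ((Sᴴ *ᵥ v) i)
          = ∑ i, (∑ m ∈ Finset.Icc 1 s, ∑ j ∈ Finset.range m, (Complex.normSq (dvec i))^j)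
            * Complex.normSq ((Sᴴ *ᵥ v) i) := by
      intro v s
      calc ∑ m ∈ Finset.Icc 1 s, ∑ j ∈ Finset.range m, ∑ i,
              (Complex.normSq (dvec i))^j * Complex.normSq ((Sᴴ *ᵥ v) i)
          = ∑ m ∈ Finset.Icc 1 s, ∑ i, ∑ j ∈ Finset.range m,
              (Complex.normSq (dvec i))^j * Complex.normSq ((Sᴴ *ᵥ v) i) :=
            Finset.sum_congr rfl fun m _ => Finset.sum_comm
        _ = ∑ i, ∑ m ∈ Finset.Icc 1 s, ∑ j ∈ Finset.range m,
              (Complex.normSq (dvec i))^j * Complex.normSq ((Sᴴ *ᵥ v) i) :=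
            Finset.sum_comm
        _ = ∑ i, (∑ m ∈ Finset.Icc 1 s, ∑ j ∈ Finset.range m,
              (Complex.normSq (dvec i))^j) * Complex.normSq ((Sᴴ *ᵥ v) i) := by
            refine Finset.sum_congr rfl fun i _ => ?_
            rw [Finset.sum_mul]
            refine Finset.sum_congr rfl fun m _ => ?_
            rw [Finset.sum_mul]
    -- key comparison
    have hHkey : ∀ (v : Fin n → ℂ),
        (k:ℝ)^2 * (∑ m ∈ Finset.Icc 1 t, ∑ j ∈ Finset.range m, ∑ i,
            (Complex.normSq (dvec i))^j * Complex.normSq ((Sᴴ *ᵥ v) i))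
          ≤ 8*(t:ℝ)^2 * (∑ m ∈ Finset.Icc 1 k, ∑ j ∈ Finset.range m, ∑ i,
            (Complex.normSq (dvec i))^j * Complex.normSq ((Sᴴ *ᵥ v) i)) := by
      intro v
      rw [hHswap v t, hHswap v k, Finset.mul_sum, Finset.mul_sum]
      refine Finset.sum_le_sum fun i _ => ?_
      have hx0 : 0 ≤ Complex.normSq (dvec i) := Complex.normSq_nonneg _
      have hx1 : Complex.normSq (dvec i) ≤ 1 := by
        have := hρ i
        rw [← Complex.sq_norm]
        nlinarith [norm_nonneg (dvec i)]
      have hkey := key_scalar (Complex.normSq (dvec i)) hx0 hx1 k t hk hkt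
      have hnsq : 0 ≤ Complex.normSq ((Sᴴ *ᵥ v) i) := Complex.normSq_nonneg _
      calc (k:ℝ)^2 * ((∑ m ∈ Finset.Icc 1 t, ∑ j ∈ Finset.range m,
              (Complex.normSq (dvec i))^j) * Complex.normSq ((Sᴴ *ᵥ v) i))
          = ((k:ℝ)^2 * ∑ m ∈ Finset.Icc 1 t, ∑ j ∈ Finset.range m,
              (Complex.normSq (dvec i))^j) * Complex.normSq ((Sᴴ *ᵥ v) i) := by ring
        _ ≤ (8*(t:ℝ)^2 * ∑ m ∈ Finset.Icc 1 k, ∑ j ∈ Finset.range m,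
              (Complex.normSq (dvec i))^j) * Complex.normSq ((Sᴴ *ᵥ v) i) :=
            mul_le_mul_of_nonneg_right hkey hnsq
        _ = 8*(t:ℝ)^2 * ((∑ m ∈ Finset.Icc 1 k, ∑ j ∈ Finset.range m,
              (Complex.normSq (dvec i))^j) * Complex.normSq ((Sᴴ *ᵥ v) i)) := by ring
    -- R facts
    have hRdet : IsUnit R.det := (Matrix.isUnit_iff_isUnit_det R).mp hR.isUnit
    -- the bound for every unit vector u
    have hmain : ∀ u : Fin n → ℂ, (∑ i, Complex.normSq (u i)) = 1 →
        μ * k / (8 * ν * t) ≤ (star u ⬝ᵥ (R⁻¹ * gammaMat A B k * R⁻¹) *ᵥ u).re := by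
      intro u hu
      obtain ⟨v, hvdef⟩ : ∃ v : Fin n → ℂ, v = R⁻¹ *ᵥ u := ⟨_, rfl⟩
      have hRinvH : (R⁻¹)ᴴ = R⁻¹ := by
        rw [Matrix.conjTranspose_nonsing_inv, hR.isHermitian.eq]
      have hquad : (star u ⬝ᵥ (R⁻¹ * gammaMat A B k * R⁻¹) *ᵥ u).re
          = (star v ⬝ᵥ (gammaMat A B k) *ᵥ v).re := by
        rw [show R⁻¹ * gammaMat A B k * R⁻¹ = (R⁻¹)ᴴ * gammaMat A B k * R⁻¹ by rw [hRinvH],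
          quadConj, ← hvdef]
      have hRv : R *ᵥ v = u := by
        rw [hvdef, Matrix.mulVec_mulVec, Matrix.mul_nonsing_inv R hRdet, Matrix.one_mulVec]
      have hGt1 : (star v ⬝ᵥ (gammaMat A B t) *ᵥ v).re = 1 := by
        have h1 : star v ⬝ᵥ (R * R) *ᵥ v = star u ⬝ᵥ u := by
          have hsv : star (R *ᵥ v) = star v ᵥ* R := by
            rw [star_mulVec, hR.isHermitian.eq]
          rw [← Matrix.mulVec_mulVec, dotProduct_mulVec, ← hsv, hRv]
        rw [← hRR, h1, dot_star_self, hu]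
        simp
      -- abbreviations
      set Ht : ℝ := ∑ m ∈ Finset.Icc 1 t, ∑ j ∈ Finset.range m, ∑ i,
          (Complex.normSq (dvec i))^j * Complex.normSq ((Sᴴ *ᵥ v) i) with hHt
      set Hk : ℝ := ∑ m ∈ Finset.Icc 1 k, ∑ j ∈ Finset.range m, ∑ i,
          (Complex.normSq (dvec i))^j * Complex.normSq ((Sᴴ *ᵥ v) i) with hHk
      -- upper bound at t gives Ht ≥ t/ν
      have hub : (1:ℝ) ≤ (t:ℝ)⁻¹ * (ν * Ht) := by
        rw [← hGt1, hgam v t]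
        have h1 : ∑ m ∈ Finset.Icc 1 t, (star v ⬝ᵥ (sigmaMat A B m) *ᵥ v).re
            ≤ ν * Ht := by
          rw [hHt, Finset.mul_sum]
          exact Finset.sum_le_sum fun m _ => hsig_ub v m
        exact mul_le_mul_of_nonneg_left h1 (by positivity)
      have hHt' : (t:ℝ) ≤ ν * Ht := by
        have := mul_le_mul_of_nonneg_left hub htpos.le
        rwa [mul_one, ← mul_assoc, mul_inv_cancel₀ htpos.ne', one_mul] at this
      -- lower bound at k
      have hlb : (k:ℝ)⁻¹ * (μ * Hk) ≤ (star v ⬝ᵥ (gammaMat A B k) *ᵥ v).re := by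
        rw [hgam v k]
        have h1 : μ * Hk ≤ ∑ m ∈ Finset.Icc 1 k, (star v ⬝ᵥ (sigmaMat A B m) *ᵥ v).re := by
          rw [hHk, Finset.mul_sum]
          exact Finset.sum_le_sum fun m _ => hsig_lb v m
        exact mul_le_mul_of_nonneg_left h1 (by positivity)
      -- combine
      have hHtnn : 0 ≤ Ht := by
        nlinarith [hHt', hν, htpos]
      have hkey := hHkey v
      rw [← hHt, ← hHk] at hkey
      have hA2 : (k:ℝ)^2 * t ≤ 8 * ν * (t:ℝ)^2 * Hk := by
        nlinarith [mul_le_mul_of_nonneg_left hHt' (sq_nonneg (k:ℝ)),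
          mul_le_mul_of_nonneg_left hkey hν.le]
      have hHk2 : (k:ℝ)^2 / (8*ν*t) ≤ Hk := by
        rw [div_le_iff₀ (by positivity)]
        have h' : (k:ℝ)^2 * t ≤ (Hk * (8*ν*t)) * t := by nlinarith [hA2]
        exact le_of_mul_le_mul_right h' htpos
      have hfin : μ * k / (8 * ν * t) ≤ (k:ℝ)⁻¹ * (μ * Hk) := by
        have he : μ * (k:ℝ) / (8*ν*t) = (k:ℝ)⁻¹ * (μ * ((k:ℝ)^2/(8*ν*t))) := by
          field_simp
        rw [he]
        have := mul_le_mul_of_nonneg_left hHk2 hμ.le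
        have := mul_le_mul_of_nonneg_left this (inv_nonneg.mpr hkpos.le)
        linarith
      rw [hquad]
      exact le_trans hfin hlb
    -- conclude via csInf
    have hrhs : μ * k / (8 * ν * t) ≤ cLambdaMin (R⁻¹ * gammaMat A B k * R⁻¹) := by
      refine le_csInf (quadSet_nonempty hn) ?_
      rintro r ⟨u, hu1, rfl⟩
      exact hmain u hu1
    have hlhs : (1 / (8 * (ν / μ))) * ((k : ℝ) / (t : ℝ)) = μ * k / (8 * ν * t) := by
      field_simp
      try ring
    rw [hlhs]
    exact hrhs
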